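/- arXiv:2405.04954 — 4 statements merged into one kernel-verified Lean document; each statement's English description precedes it below -/
import Mathlib

section
/- For real x, integers n ≥ 1 and k ≥ 1: k · x^{n-1} = Σ_{i_1 + ... + i_k = n} (n choose i_1,...,i_k) · Π_{j=1}^{k} (1 + i_j · (x-k)/n)^{i_j - 1}, where the sum ranges over nonnegative integer tuples summing to n (with the Abel polynomial convention that the factor for i_j = 0 equals 1). -/
open Finset

/-!
The Abel polynomials `A_n(x) = x (x + n a)^(n-1)`, `A_0 = 1`, form a sequence of binomial type,
`A_n(x + y) = ∑ (n choose i) A_i(x) A_(n-i)(y)`: since `A_n' (x) = n A_(n-1)(x + a)`, induction on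
`n` shows that both sides have the same derivative in `x`, and they agree at `x = 0` because
`A_n(0) = 0` for `n > 0`. Induction on the number of variables, as for the multinomial theorem,
turns this into `A_n(x_1 + ⋯ + x_k) = ∑ (n choose i_1, …, i_k) ∏ A_(i_j)(x_j)`. With all `x_j = 1`
and `a = (x - k) / n` the left side is `A_n(k) = k x^(n-1)` and the factors are
`A_i(1) = (1 + i a)^(i-1)`.
-/

structure IsBinomialType {R : Type*} [CommSemiring R] (p : ℕ → R → R) : Prop where
  zero_zero : p 0 0 = 1
  succ_zero : ∀ n, p (n + 1) 0 = 0
  add : ∀ n x y, p n (x + y) = ∑ ij ∈ antidiagonal n, (n.choose ij.1 : R) * p ij.1 x * p ij.2 y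

namespace IsBinomialType

theorem sum_piAntidiag {R ι : Type*} [CommSemiring R] [DecidableEq ι] {p : ℕ → R → R}
    (hp : IsBinomialType p) (s : Finset ι) (x : ι → R) (n : ℕ) :
    ∑ m ∈ s.piAntidiag n, (Nat.multinomial s m : R) * ∏ j ∈ s, p (m j) (x j) =
      p n (∑ j ∈ s, x j) := by
  induction s using Finset.cons_induction generalizing n with
  | empty => cases n <;> simp [hp.zero_zero, hp.succ_zero]
  | cons a s ha ih =>
    rw [piAntidiag_cons, sum_disjiUnion, sum_cons, hp.add]
    refine sum_congr rfl fun ij hij => ?_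
    rw [Finset.sum_map, mul_assoc, ← ih ij.2, Finset.mul_sum, Finset.mul_sum]
    refine sum_congr rfl fun g hg => ?_
    rw [mem_piAntidiag] at hg
    have hga : g a = 0 := by_contra fun h => ha (hg.2 a h)
    have hs : ∀ t ∈ s, (g + fun t => if t = a then ij.1 else 0) t = g t := fun t ht => by
      simp [ne_of_mem_of_not_mem ht ha]
    rw [addRightEmbedding_apply, Nat.multinomial_cons, prod_cons, Nat.multinomial_congr hs,
      prod_congr rfl fun t ht => by rw [hs t ht], sum_congr rfl hs, hg.1]
    simp only [Pi.add_apply, hga, if_pos, zero_add, ← mem_antidiagonal.1 hij]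
    push_cast
    ring

theorem of_hasDerivAt {𝕜 : Type*} [RCLike 𝕜] {p : ℕ → 𝕜 → 𝕜} (a : 𝕜)
    (h_zero : ∀ x, p 0 x = 1) (h_succ_zero : ∀ n, p (n + 1) 0 = 0)
    (h_deriv : ∀ n x, HasDerivAt (p (n + 1)) ((n + 1) * p n (x + a)) x) :
    IsBinomialType p := by
  refine ⟨h_zero 0, h_succ_zero, fun n => ?_⟩
  induction n with
  | zero => simp [h_zero]
  | succ n ih =>
    intro x y
    set F : 𝕜 → 𝕜 := fun z =>
      ∑ ij ∈ antidiagonal n, ((n + 1).choose (ij.1 + 1) : 𝕜) * p (ij.1 + 1) z * p ij.2 y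
    have hF : ∀ z, HasDerivAt F ((n + 1) * p n (z + y + a)) z := by
      intro z
      refine (HasDerivAt.fun_sum (u := antidiagonal n) fun ij _ =>
        ((h_deriv ij.1 z).const_mul ((n + 1).choose (ij.1 + 1) : 𝕜)).mul_const
          (p ij.2 y)).congr_deriv ?_
      rw [add_right_comm, ih, Finset.mul_sum]
      refine sum_congr rfl fun ij _ => ?_
      have h : ((n + 1 : ℕ) * n.choose ij.1 : 𝕜) = (n + 1).choose (ij.1 + 1) * (ij.1 + 1 : ℕ) := by
        exact_mod_cast Nat.add_one_mul_choose_eq n ij.1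
      push_cast at h
      linear_combination (p ij.1 (z + a) * p ij.2 y) * h.symm
    have hG : ∀ z, HasDerivAt (fun z => p (n + 1) (z + y)) ((n + 1) * p n (z + y + a)) z :=
      fun z => (h_deriv n (z + y)).comp_add_const z y
    have hconst : F x - p (n + 1) (x + y) = F 0 - p (n + 1) (0 + y) :=
      is_const_of_deriv_eq_zero (fun z => ((hF z).sub (hG z)).differentiableAt)
        (fun z => by rw [((hF z).sub (hG z)).deriv, sub_self]) x 0
    simp only [F, h_succ_zero, mul_zero, zero_mul, sum_const_zero, zero_add] at hconst
    rw [Nat.sum_antidiagonal_succ, h_zero, Nat.choose_zero_right, Nat.cast_one, one_mul, one_mul]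
    linear_combination -hconst

end IsBinomialType

def abelPoly {R : Type*} [CommRing R] (a : R) : ℕ → R → R
  | 0, _ => 1
  | n + 1, x => x * (x + (n + 1) * a) ^ n

theorem abelPoly_succ {R : Type*} [CommRing R] (a : R) (n : ℕ) (x : R) :
    abelPoly a (n + 1) x = x * (x + (n + 1) * a) ^ n :=
  rfl

theorem abelPoly_one {R : Type*} [CommRing R] (a : R) (n : ℕ) :
    abelPoly a n 1 = (1 + n * a) ^ (n - 1) := by
  cases n <;> simp [abelPoly]

theorem hasDerivAt_abelPoly_succ {𝕜 : Type*} [NontriviallyNormedField 𝕜] (a : 𝕜) (n : ℕ)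
    (x : 𝕜) : HasDerivAt (abelPoly a (n + 1)) ((n + 1) * abelPoly a n (x + a)) x := by
  refine ((hasDerivAt_id x).mul
    (((hasDerivAt_id x).add_const ((n + 1) * a)).pow n)).congr_deriv ?_
  cases n with
  | zero => simp [abelPoly]
  | succ n =>
    simp only [abelPoly, Pi.pow_apply, id, Nat.add_sub_cancel, pow_succ]
    push_cast
    ring

theorem abelPoly_isBinomialType {𝕜 : Type*} [RCLike 𝕜] (a : 𝕜) :
    IsBinomialType (abelPoly a) :=
  .of_hasDerivAt a (fun _ => rfl) (fun _ => zero_mul _) (hasDerivAt_abelPoly_succ a)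

theorem abel_corollary_general (n k : ℕ) (hn : 1 ≤ n) (x : ℝ) :
    (k : ℝ) * x ^ (n - 1) =
      ∑ m ∈ Finset.Nat.antidiagonalTuple k n,
        (Nat.multinomial Finset.univ m : ℝ) *
          ∏ j, (1 + (m j : ℝ) * (x - k) / n) ^ (m j - 1) := by
  obtain ⟨n, rfl⟩ := Nat.exists_eq_add_of_le' hn
  set a : ℝ := (x - k) / (n + 1 : ℕ)
  have hka : (k : ℝ) + (n + 1) * a = x := by
    simp only [a]
    field_simp
    push_cast
    ring
  have key := (abelPoly_isBinomialType a).sum_piAntidiag univ (fun _ : Fin k => 1) (n + 1)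
  simp only [piAntidiag_univ_fin_eq_antidiagonalTuple, abelPoly_one, sum_const, card_univ,
    Fintype.card_fin, nsmul_eq_mul, mul_one, abelPoly_succ, hka] at key
  simp only [Nat.add_sub_cancel, ← key, mul_div_assoc, a]

theorem abel_corollary (n k : ℕ) (hn : 1 ≤ n) (hk : 1 ≤ k) (x : ℝ) :
    (k : ℝ) * x ^ (n - 1) =
      ∑ m ∈ Finset.Nat.antidiagonalTuple k n,
        (Nat.multinomial Finset.univ m : ℝ) *
          ∏ j, (1 + (m j : ℝ) * (x - k) / n) ^ (m j - 1) :=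
  abel_corollary_general n k hn x
end

section
/- For positive integers a, b, n and indeterminate q: Σ_{c ∈ P_n(X)} q^{Z(c)} = (q+a-1)·(q+a-1+bn)^{n-1}, where P_n(X) is the set of x-parking functions of length n for X = (a,b,...,b), and Z(c) is the number of entries of c equal to 1. -/
open Finset
open scoped Classical

/-- `c` rearranges nondecreasingly so that the `i`-th order statistic is at most `u i`. -/
def SortedLE {n : ℕ} (c u : Fin n → ℕ) : Prop :=
  ∃ σ : Equiv.Perm (Fin n),
    (∀ i j : Fin n, i ≤ j → c (σ i) ≤ c (σ j)) ∧ ∀ i, c (σ i) ≤ u i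

/-- The (finite) set of `(a,b,…,b)`-parking functions of length `n`:
positive integer sequences whose `i`-th order statistic is at most `a + (i-1)b`. -/
noncomputable def xParkFinset (a b n : ℕ) : Finset (Fin n → ℕ) :=
  (Fintype.piFinset fun _ : Fin n => Finset.Icc 1 (a + (n - 1) * b)).filter
    (fun c => SortedLE c (fun i => a + i.1 * b))

lemma count_perm {n : ℕ} (c : Fin n → ℕ) (σ : Equiv.Perm (Fin n)) (t : ℕ) :
    (univ.filter fun j => c (σ j) ≤ t).card = (univ.filter fun j => c j ≤ t).card := by
  apply Finset.card_bij (fun j _ => σ j)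
  · intro j hj; simp only [mem_filter, mem_univ, true_and] at *; exact hj
  · intro j₁ _ j₂ _ h; exact σ.injective h
  · intro j hj
    refine ⟨σ.symm j, ?_, by simp⟩
    simp only [mem_filter, mem_univ, true_and, Equiv.apply_symm_apply] at *; exact hj

lemma sortedLE_iff {n : ℕ} (c u : Fin n → ℕ) :
    SortedLE c u ↔ ∀ i : Fin n, (i : ℕ) + 1 ≤ (univ.filter fun j => c j ≤ u i).card := by
  constructor
  · rintro ⟨σ, hmono, hle⟩ i
    have hsub : (Finset.Iic i).image σ ⊆ univ.filter fun j => c j ≤ u i := by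
      intro j hj
      simp only [mem_image, mem_Iic] at hj
      obtain ⟨j', hj', rfl⟩ := hj
      simp only [mem_filter, mem_univ, true_and]
      exact le_trans (hmono j' i hj') (hle i)
    calc (i : ℕ) + 1 = (Finset.Iic i).card := by rw [Fin.card_Iic]
      _ = ((Finset.Iic i).image σ).card := (Finset.card_image_of_injective _ σ.injective).symm
      _ ≤ _ := Finset.card_le_card hsub
  · intro h
    refine ⟨Tuple.sort c, fun i j hij => Tuple.monotone_sort c hij, fun i => ?_⟩
    by_contra hlt
    push_neg at hlt
    have hcnt : (i : ℕ) + 1 ≤ (univ.filter fun j => c (Tuple.sort c j) ≤ u i).card := by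
      rw [count_perm]; exact h i
    have hsub : (univ.filter fun j => c (Tuple.sort c j) ≤ u i) ⊆ Finset.Iio i := by
      intro j hj
      simp only [mem_filter, mem_univ, true_and] at hj
      rw [Finset.mem_Iio]
      by_contra hge
      push_neg at hge
      exact absurd (le_trans (Tuple.monotone_sort c hge) hj) (not_le.mpr hlt)
    have := le_trans hcnt (Finset.card_le_card hsub)
    rw [Fin.card_Iio] at this
    omega

lemma mem_xPark_iff {x b n : ℕ} (c : Fin n → ℕ) :
    c ∈ xParkFinset x b n ↔
      (∀ i, 1 ≤ c i ∧ c i ≤ x + (n - 1) * b) ∧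
        ∀ i : Fin n, (i : ℕ) + 1 ≤ (univ.filter fun j => c j ≤ x + (i : ℕ) * b).card := by
  simp [xParkFinset, Fintype.mem_piFinset, Finset.mem_Icc, sortedLE_iff]

lemma xPark_zero {b m : ℕ} (hm : 1 ≤ m) : xParkFinset 0 b m = ∅ := by
  ext c
  simp only [Finset.notMem_empty, iff_false]
  intro hc
  rw [mem_xPark_iff] at hc
  have h0 := hc.2 ⟨0, hm⟩
  simp only [Fin.val_mk, Nat.zero_mul, Nat.zero_add, zero_add] at h0
  have : (univ.filter fun j => c j ≤ 0) = ∅ := by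
    ext j
    simp only [mem_filter, mem_univ, true_and, Finset.notMem_empty, iff_false]
    have := (hc.1 j).1; omega
  rw [this] at h0
  simp at h0

lemma xPark_card_nil (x b : ℕ) : (xParkFinset x b 0).card = 1 := by
  rw [Finset.card_eq_one]
  refine ⟨fun i => i.elim0, ?_⟩
  ext c
  constructor
  · intro _; simp only [Finset.mem_singleton]; funext i; exact i.elim0
  · intro hc
    rw [mem_xPark_iff]
    exact ⟨fun i => i.elim0, fun i => i.elim0⟩
lemma count_split {n t : ℕ} (S : Finset (Fin n)) (c : Fin n → ℕ)
    (hS : univ.filter (fun i => c i = 1) = S) (ht : 1 ≤ t)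
    (ι : Fin (n - S.card) ≃o {y // y ∈ Sᶜ}) :
    (univ.filter fun i => c i ≤ t).card
      = S.card + (univ.filter fun j => c (ι j) ≤ t).card := by
  have hmem : ∀ i, i ∈ S ↔ c i = 1 := by
    intro i; rw [← hS]; simp
  have h1 : univ.filter (fun i => c i ≤ t) = S ∪ Sᶜ.filter (fun i => c i ≤ t) := by
    ext i
    simp only [mem_filter, mem_univ, true_and, mem_union, mem_compl]
    constructor
    · intro h
      by_cases hi : i ∈ S
      · exact Or.inl hi
      · exact Or.inr ⟨hi, h⟩
    · rintro (hi | ⟨_, h⟩)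
      · rw [(hmem i).mp hi]; exact ht
      · exact h
  have hdisj : Disjoint S (Sᶜ.filter (fun i => c i ≤ t)) :=
    Finset.disjoint_left.mpr fun i hi hi' => (mem_compl.mp (mem_filter.mp hi').1) hi
  rw [h1, Finset.card_union_of_disjoint hdisj]
  congr 1
  have himg : Sᶜ.filter (fun i => c i ≤ t)
      = (univ.filter fun j => c (ι j) ≤ t).image (fun j => ((ι j : {y // y ∈ Sᶜ}) : Fin n)) := by
    ext i
    simp only [mem_filter, mem_image, mem_univ, true_and]
    constructor
    · rintro ⟨hi, h⟩
      refine ⟨ι.symm ⟨i, hi⟩, ?_, ?_⟩ <;> simp [h]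
    · rintro ⟨j, hj, rfl⟩
      exact ⟨(ι j).2, hj⟩
  rw [himg, Finset.card_image_of_injective]
  exact fun j₁ j₂ h => ι.injective (Subtype.ext h)

lemma fiber_card {n b x : ℕ} (hx : 1 ≤ x) (S : Finset (Fin n)) :
    ((xParkFinset x b n).filter fun c => univ.filter (fun i => c i = 1) = S).card
      = (xParkFinset (x - 1 + S.card * b) b (n - S.card)).card := by
  have hkn : S.card ≤ n := by
    have := Finset.card_le_univ S; simpa using this
  have hcompl : Sᶜ.card = n - S.card := by
    rw [Finset.card_compl, Fintype.card_fin]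
  set k := S.card with hk
  set ι : Fin (n - k) ≃o {y // y ∈ Sᶜ} := Sᶜ.orderIsoOfFin hcompl with hι
  have hιS : ∀ j : Fin (n - k), ((ι j : {y // y ∈ Sᶜ}) : Fin n) ∉ S :=
    fun j => mem_compl.mp (ι j).2
  have hΨι : ∀ (c' : Fin (n - k) → ℕ) (j : Fin (n - k)),
      (if h : ((ι j : {y // y ∈ Sᶜ}) : Fin n) ∈ Sᶜ then c' (ι.symm ⟨(ι j : {y // y ∈ Sᶜ}), h⟩) + 1 else 1)
        = c' j + 1 := by
    intro c' j
    rw [dif_pos (ι j).2]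
    have h2 : (⟨((ι j : {y // y ∈ Sᶜ}) : Fin n), (ι j).2⟩ : {y // y ∈ Sᶜ}) = ι j :=
      Subtype.ext rfl
    rw [h2, ι.symm_apply_apply]
  refine Finset.card_bij' (fun c _ => fun j : Fin (n - k) => c (ι j) - 1)
    (fun c' _ => fun i : Fin n => if h : i ∈ Sᶜ then c' (ι.symm ⟨i, h⟩) + 1 else 1)
    ?hi ?hj ?li ?ri
  case hi =>
    intro c hc
    rw [Finset.mem_filter] at hc
    obtain ⟨hc, hones⟩ := hc
    rw [mem_xPark_iff] at hc ⊢
    have hmem : ∀ i, i ∈ S ↔ c i = 1 := by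
      intro i; rw [← hones]; simp
    have h2 : ∀ j : Fin (n - k), 2 ≤ c (ι j) := by
      intro j
      have h1 := (hc.1 (ι j)).1
      have hne : c (ι j) ≠ 1 := fun h => hιS j ((hmem _).mpr h)
      omega
    constructor
    · intro j
      have hnk : 1 ≤ n - k := by have := j.isLt; omega
      have hub := (hc.1 (ι j)).2
      have harith : x - 1 + k * b + (n - k - 1) * b = x - 1 + (n - 1) * b := by
        rw [add_assoc, ← add_mul]; congr 2; omega
      rw [harith]
      have h2' := h2 j
      set B := (n - 1) * b
      omega
    · intro j
      have hjn : k + (j : ℕ) < n := by have := j.isLt; omega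
      have hcond := hc.2 ⟨k + j, hjn⟩
      simp only [Fin.val_mk] at hcond
      have hfeq : (univ.filter fun j' : Fin (n - k) => c (ι j') - 1 ≤ x - 1 + k * b + (j : ℕ) * b)
          = univ.filter fun j' : Fin (n - k) => c (ι j') ≤ x + (k + (j : ℕ)) * b := by
        apply Finset.filter_congr
        intro j' _
        have h2' := h2 j'
        have harith2 : x - 1 + k * b + (j : ℕ) * b = x - 1 + (k + (j : ℕ)) * b := by
          rw [add_assoc, ← add_mul]
        rw [harith2]
        generalize (k + (j : ℕ)) * b = T
        omega
      rw [hfeq]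
      have hcond2 : k + (j : ℕ) + 1 ≤ k
          + (univ.filter fun j' : Fin (n - k) => c (ι j') ≤ x + (k + (j : ℕ)) * b).card :=
        le_trans hcond (le_of_eq (count_split S c hones (by omega) ι))
      omega
  case hj =>
    intro c' hc'
    rw [mem_xPark_iff] at hc'
    rw [Finset.mem_filter]
    have hones : univ.filter (fun i =>
        (if h : i ∈ Sᶜ then c' (ι.symm ⟨i, h⟩) + 1 else 1) = 1) = S := by
      ext i
      simp only [mem_filter, mem_univ, true_and]
      by_cases hi : i ∈ Sᶜ
      · rw [dif_pos hi]
        have h1 := (hc'.1 (ι.symm ⟨i, hi⟩)).1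
        constructor
        · intro h; omega
        · intro h; exact absurd hi (by simpa using h)
      · rw [dif_neg hi]
        have hiS : i ∈ S := by simpa using hi
        simp [hiS]
    refine ⟨?_, hones⟩
    rw [mem_xPark_iff]
    constructor
    · intro i
      by_cases hi : i ∈ Sᶜ
      · rw [dif_pos hi]
        have hb1 := (hc'.1 (ι.symm ⟨i, hi⟩)).2
        have hnk : 1 ≤ n - k := by
          have h1 : 1 ≤ Sᶜ.card := Finset.card_pos.mpr ⟨i, hi⟩
          omega
        have harith : x - 1 + k * b + (n - k - 1) * b = x - 1 + (n - 1) * b := by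
          rw [add_assoc, ← add_mul]; congr 2; omega
        rw [harith] at hb1
        set B := (n - 1) * b
        omega
      · rw [dif_neg hi]
        set B := (n - 1) * b
        omega
    · intro i
      rw [count_split S _ hones (by omega) ι]
      by_cases hik : (i : ℕ) < k
      · omega
      · push_neg at hik
        have hj0 : (i : ℕ) - k < n - k := by
          have := i.isLt; omega
        have hcond := hc'.2 ⟨(i : ℕ) - k, hj0⟩
        simp only [Fin.val_mk] at hcond
        have harith : x - 1 + k * b + ((i : ℕ) - k) * b = x - 1 + (i : ℕ) * b := by
          rw [add_assoc, ← add_mul]; congr 2; omega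
        rw [harith] at hcond
        have hfeq : (univ.filter fun j : Fin (n - k) =>
            (if h : ((ι j : {y // y ∈ Sᶜ}) : Fin n) ∈ Sᶜ then c' (ι.symm ⟨(ι j : {y // y ∈ Sᶜ}), h⟩) + 1 else 1)
              ≤ x + (i : ℕ) * b)
            = univ.filter fun j : Fin (n - k) => c' j ≤ x - 1 + (i : ℕ) * b := by
          apply Finset.filter_congr
          intro j _
          rw [hΨι c' j]
          have hx1 := hx
          generalize (i : ℕ) * b = T
          omega
        rw [hfeq]
        have hcond2 : (i : ℕ) - k + 1
            ≤ (univ.filter fun j : Fin (n - k) => c' j ≤ x - 1 + (i : ℕ) * b).card := hcond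
        omega
  case li =>
    intro c hc
    rw [Finset.mem_filter] at hc
    obtain ⟨hc, hones⟩ := hc
    rw [mem_xPark_iff] at hc
    have hmem : ∀ i, i ∈ S ↔ c i = 1 := by
      intro i; rw [← hones]; simp
    funext i
    dsimp only
    by_cases hi : i ∈ Sᶜ
    · rw [dif_pos hi]
      have heq : ((ι (ι.symm ⟨i, hi⟩) : {y // y ∈ Sᶜ}) : Fin n) = i := by
        rw [ι.apply_symm_apply]
      rw [heq]
      have := (hc.1 i).1
      omega
    · rw [dif_neg hi]
      have hiS : i ∈ S := by simpa using hi
      exact ((hmem i).mp hiS).symm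
  case ri =>
    intro c' _
    funext j
    dsimp only
    rw [hΨι c' j]
    omega
lemma sum_fiber_rec {n b x : ℕ} (hx : 1 ≤ x) (q : ℝ) :
    ∑ c ∈ xParkFinset x b n, q ^ (univ.filter (fun i => c i = 1)).card
      = ∑ k ∈ Finset.range (n + 1),
          (n.choose k : ℝ) * q ^ k * ((xParkFinset (x - 1 + k * b) b (n - k)).card : ℝ) := by
  have hmaps : ∀ c ∈ xParkFinset x b n,
      (univ.filter (fun i => c i = 1)) ∈ (univ : Finset (Finset (Fin n))) := by
    intro c _; exact mem_univ _
  rw [← Finset.sum_fiberwise_of_maps_to hmaps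
    (fun c => q ^ (univ.filter (fun i => c i = 1)).card)]
  have hstep : ∀ S ∈ (univ : Finset (Finset (Fin n))),
      (∑ c ∈ (xParkFinset x b n).filter (fun c => univ.filter (fun i => c i = 1) = S),
          q ^ (univ.filter (fun i => c i = 1)).card)
        = q ^ S.card * ((xParkFinset (x - 1 + S.card * b) b (n - S.card)).card : ℝ) := by
    intro S _
    have h1 : ∀ c ∈ (xParkFinset x b n).filter (fun c => univ.filter (fun i => c i = 1) = S),
        q ^ (univ.filter (fun i => c i = 1)).card = q ^ S.card := by
      intro c hc
      rw [(Finset.mem_filter.mp hc).2]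
    rw [Finset.sum_congr rfl h1, Finset.sum_const, nsmul_eq_mul, fiber_card hx S, mul_comm]
  rw [Finset.sum_congr rfl hstep]
  have hpow : (univ : Finset (Finset (Fin n))) = (univ : Finset (Fin n)).powerset :=
    Finset.powerset_univ.symm
  rw [hpow]
  have := Finset.sum_powerset_apply_card
    (f := fun m => q ^ m * ((xParkFinset (x - 1 + m * b) b (n - m)).card : ℝ))
    (x := (univ : Finset (Fin n)))
  rw [this]
  have hcard : (univ : Finset (Fin n)).card = n := by
    rw [Finset.card_univ, Fintype.card_fin]
  rw [Finset.sum_congr (by rw [hcard]) (fun k _ => rfl)]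
  refine Finset.sum_congr rfl fun k _ => ?_
  rw [hcard, nsmul_eq_mul, mul_assoc]
lemma choose_aux (n k : ℕ) (hn : 1 ≤ n) (hk : k < n) :
    n * Nat.choose (n - 1) k = Nat.choose n k * (n - k) := by
  obtain ⟨m, rfl⟩ : ∃ m, n = m + 1 := ⟨n - 1, by omega⟩
  have h1 := Nat.add_one_mul_choose_eq m k
  have h2 := Nat.choose_succ_right_eq (m + 1) k
  simpa using h1.trans h2

lemma abel_id (q x bb : ℝ) (n : ℕ) (hn : 1 ≤ n) :
    ∑ k ∈ Finset.range n, (n.choose k : ℝ) * q ^ k * ((x + k * bb) * (x + n * bb) ^ (n - 1 - k))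
        + q ^ n
      = (q + x) * (q + x + n * bb) ^ (n - 1) := by
  set y : ℝ := x + n * bb with hy
  have hsplit : ∀ k ∈ Finset.range n,
      (n.choose k : ℝ) * q ^ k * ((x + k * bb) * y ^ (n - 1 - k))
        = (n.choose k : ℝ) * (q ^ k * y ^ (n - k))
          - bb * ((n : ℝ) * (((n - 1).choose k : ℝ) * (q ^ k * y ^ (n - 1 - k)))) := by
    intro k hk
    rw [Finset.mem_range] at hk
    have h1 : x + k * bb = y - ((n - k : ℕ) : ℝ) * bb := by
      rw [hy]
      push_cast [Nat.cast_sub hk.le]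
      ring
    have h2 : y ^ (n - k) = y ^ (n - 1 - k) * y := by
      rw [← pow_succ]
      congr 1
      omega
    have h3 : (n : ℝ) * (((n - 1).choose k : ℝ)) = (n.choose k : ℝ) * (((n - k : ℕ)) : ℝ) := by
      exact_mod_cast congrArg (Nat.cast : ℕ → ℝ) (choose_aux n k hn hk)
    rw [h1, h2]
    linear_combination bb * q ^ k * y ^ (n - 1 - k) * h3
  rw [Finset.sum_congr rfl hsplit, Finset.sum_sub_distrib]
  have hbin1 : (∑ k ∈ Finset.range n, (n.choose k : ℝ) * (q ^ k * y ^ (n - k))) + q ^ n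
      = (q + y) ^ n := by
    rw [add_pow, Finset.sum_range_succ]
    have hlast : q ^ n * y ^ (n - n) * (n.choose n : ℝ) = q ^ n := by
      simp
    rw [hlast]
    congr 1
    refine Finset.sum_congr rfl fun k _ => ?_
    ring
  have hbin2 : (∑ k ∈ Finset.range n,
        bb * ((n : ℝ) * (((n - 1).choose k : ℝ) * (q ^ k * y ^ (n - 1 - k)))))
      = bb * (n : ℝ) * (q + y) ^ (n - 1) := by
    rw [add_pow, Finset.mul_sum]
    have hn1 : n - 1 + 1 = n := by omega
    rw [hn1]
    refine Finset.sum_congr rfl fun k _ => ?_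
    ring
  have hre : (∑ k ∈ Finset.range n, (n.choose k : ℝ) * (q ^ k * y ^ (n - k)))
        - (∑ k ∈ Finset.range n,
            bb * ((n : ℝ) * (((n - 1).choose k : ℝ) * (q ^ k * y ^ (n - 1 - k))))) + q ^ n
      = ((∑ k ∈ Finset.range n, (n.choose k : ℝ) * (q ^ k * y ^ (n - k))) + q ^ n)
        - (∑ k ∈ Finset.range n,
            bb * ((n : ℝ) * (((n - 1).choose k : ℝ) * (q ^ k * y ^ (n - 1 - k))))) := by
    ring
  rw [hre, hbin1, hbin2]
  have hqy : q + x + (n : ℝ) * bb = q + y := by rw [hy]; ring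
  rw [hqy]
  have hpow : (q + y) ^ n = (q + y) ^ (n - 1) * (q + y) := by
    rw [← pow_succ]
    congr 1
    omega
  rw [hpow]
  linear_combination (q + y) ^ (n - 1) * hy
lemma xPark_card_formula (b : ℕ) :
    ∀ n, 1 ≤ n → ∀ x : ℕ, ((xParkFinset x b n).card : ℝ)
      = (x : ℝ) * ((x : ℝ) + (n : ℝ) * (b : ℝ)) ^ (n - 1) := by
  intro n
  induction n using Nat.strong_induction_on with
  | _ n IH =>
    intro hn x
    induction x with
    | zero =>
      rw [xPark_zero hn]
      simp
    | succ x IHx =>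
      have hrec := sum_fiber_rec (n := n) (b := b) (x := x + 1) (by omega) 1
      have hL : (∑ c ∈ xParkFinset (x + 1) b n,
          (1 : ℝ) ^ (univ.filter (fun i => c i = 1)).card)
            = ((xParkFinset (x + 1) b n).card : ℝ) := by
        simp
      rw [hL] at hrec
      simp only [Nat.add_sub_cancel] at hrec
      rw [Finset.sum_range_succ] at hrec
      have hlast : ((n.choose n : ℝ)) * (1 : ℝ) ^ n
          * ((xParkFinset (x + n * b) b (n - n)).card : ℝ) = 1 := by
        rw [Nat.sub_self, Nat.choose_self]
        have := xPark_card_nil (x + n * b) b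
        rw [this]
        simp
      rw [hlast] at hrec
      have hterm : ∀ k ∈ Finset.range n,
          ((n.choose k : ℝ)) * (1 : ℝ) ^ k * ((xParkFinset (x + k * b) b (n - k)).card : ℝ)
            = ((n.choose k : ℝ)) * (1 : ℝ) ^ k
                * (((x : ℝ) + (k : ℝ) * (b : ℝ)) * ((x : ℝ) + (n : ℝ) * (b : ℝ)) ^ (n - 1 - k)) := by
        intro k hk
        rw [Finset.mem_range] at hk
        congr 1
        by_cases hk0 : k = 0
        · subst hk0
          simp only [Nat.zero_mul, Nat.add_zero, Nat.sub_zero, Nat.cast_zero, zero_mul, add_zero]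
          rw [IHx]
        · have h1 : 1 ≤ n - k := by omega
          have h2 : n - k < n := by omega
          rw [IH (n - k) h2 h1 (x + k * b)]
          have hcast : ((x + k * b : ℕ) : ℝ) = (x : ℝ) + (k : ℝ) * (b : ℝ) := by
            push_cast; ring
          rw [hcast]
          congr 1
          · congr 1
            · push_cast [Nat.cast_sub hk.le]
              ring
            · omega
      rw [Finset.sum_congr rfl hterm] at hrec
      have key := abel_id 1 (x : ℝ) (b : ℝ) n hn
      rw [one_pow] at key
      rw [hrec, key]
      push_cast
      ring

theorem q_analogue_x_parking (a b n : ℕ) (ha : 0 < a) (hb : 0 < b) (hn : 0 < n) (q : ℝ) :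
    ∑ c ∈ xParkFinset a b n, q ^ (Finset.univ.filter (fun i => c i = 1)).card =
      (q + a - 1) * (q + a - 1 + b * n) ^ (n - 1) := by
  have hrec := sum_fiber_rec (n := n) (b := b) (x := a) ha q
  rw [hrec, Finset.sum_range_succ]
  have hlast : ((n.choose n : ℝ)) * q ^ n
      * ((xParkFinset (a - 1 + n * b) b (n - n)).card : ℝ) = q ^ n := by
    rw [Nat.sub_self, Nat.choose_self, xPark_card_nil]
    simp
  rw [hlast]
  have hterm : ∀ k ∈ Finset.range n,
      ((n.choose k : ℝ)) * q ^ k * ((xParkFinset (a - 1 + k * b) b (n - k)).card : ℝ)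
        = ((n.choose k : ℝ)) * q ^ k
            * ((((a : ℝ) - 1) + (k : ℝ) * (b : ℝ))
                * (((a : ℝ) - 1) + (n : ℝ) * (b : ℝ)) ^ (n - 1 - k)) := by
    intro k hk
    rw [Finset.mem_range] at hk
    congr 1
    have h1 : 1 ≤ n - k := by omega
    rw [xPark_card_formula b (n - k) h1 (a - 1 + k * b)]
    have hcast : ((a - 1 + k * b : ℕ) : ℝ) = ((a : ℝ) - 1) + (k : ℝ) * (b : ℝ) := by
      push_cast [Nat.cast_sub ha]
      ring
    rw [hcast]
    congr 1
    congr 1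
    · push_cast [Nat.cast_sub hk.le]
      ring
    · omega
  rw [Finset.sum_congr rfl hterm]
  have key := abel_id q ((a : ℝ) - 1) (b : ℝ) n hn
  rw [key]
  have h1 : q + ((a : ℝ) - 1) = q + (a : ℝ) - 1 := by ring
  have h2 : q + (a : ℝ) - 1 + (n : ℝ) * (b : ℝ) = q + (a : ℝ) - 1 + (b : ℝ) * (n : ℝ) := by
    ring
  rw [h1, h2]
end

section
/- Specializing the q-analogue at k = 0 (i.e., a = 1): for d = n+1 and thresholds u = (1,...,1,2,...,2,...) (each value repeated b times, of length db), Σ_{c ∈ PF_{db}(u)} q^{Z(c)} = Σ_{J ∈ spec(d,b)} (db choose j_1,...,j_d) · q^{j_1}, where Z(c) counts entries equal to 1. -/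
open Finset
open scoped Classical

/-- `spec d b`: compositions `(j_1,…,j_d)` of `d·b` into `d` nonnegative parts whose
partial sums satisfy `j_1 + ⋯ + j_t ≥ t·b`. -/
def spec (d b : ℕ) : Finset (Fin d → ℕ) :=
  (Finset.Nat.antidiagonalTuple d (d * b)).filter
    (fun J => ∀ t : Fin d, (t.1 + 1) * b ≤ ∑ i ∈ Finset.univ.filter (· ≤ t), J i)

/-- The set of `u`-parking functions of length `d·b` with thresholds
`u_i = 1 + ⌊i/b⌋` (each value `1,…,d` repeated `b` times). -/
noncomputable def uParkFinset (b d : ℕ) : Finset (Fin (d * b) → ℕ) :=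
  (Fintype.piFinset fun _ : Fin (d * b) => Finset.Icc 1 (1 + (d * b - 1) / b)).filter
    (fun c => SortedLE c (fun i => 1 + i.1 / b))

/-!
Write a parking function as `c = f + 1` with `f : Fin (d b) → Fin d` and let `J a = #f⁻¹(a)` be the
content of `f`. The `i`-th order statistic of `c` is at most `u i` iff more than `i` entries of `c`
are `≤ u i`; for `u i = 1 + ⌊i/b⌋` this says that at least `(t+1) b` entries of `f` are `≤ t` for
every `t < d`, i.e. `J ∈ spec d b`. Moreover `Z(c) = J 0`, so grouping the sum by content leaves
the number of tuples with content `J`, which is `multinomial J`: the coefficient of `∏ X_a ^ J a` in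
`(∑ X_a) ^ (d b) = ∑_f ∏_i X_{f i}`.
-/

section FiberCard

variable {ι σ : Type*} [Fintype ι] [DecidableEq σ]

def fiberCard (f : ι → σ) (a : σ) : ℕ := #{i | f i = a}

theorem sum_fiberCard (f : ι → σ) (s : Finset σ) : ∑ a ∈ s, fiberCard f a = #{i | f i ∈ s} :=
  sum_card_fiberwise_eq_card_filter _ _ _

theorem coe_sum_single_one_eq_fiberCard (f : ι → σ) :
    ⇑(∑ i, Finsupp.single (f i) 1) = fiberCard f := by
  ext a
  simp [Finsupp.finsetSum_apply, Finsupp.single_apply, fiberCard]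

variable [DecidableEq ι] [Fintype σ]

theorem card_filter_fiberCard_eq_multinomial (J : σ → ℕ) (hJ : ∑ a, J a = Fintype.card ι) :
    #{f : ι → σ | fiberCard f = J} = Nat.multinomial univ J := by
  set m : σ →₀ ℕ := Finsupp.equivFunOnFinite.symm J
  have hm : m.sum (fun _ k ↦ k) = Fintype.card ι := by
    rw [Finsupp.sum_fintype _ _ fun _ ↦ rfl]
    exact hJ
  have hcoeff := MvPolynomial.coeff_sum_X_pow_of_fintype (R := ℕ) m (Fintype.card ι)
  rw [if_pos hm, Finsupp.multinomial_eq_of_support_subset (subset_univ _),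
    Finsupp.coe_equivFunOnFinite_symm, ← card_univ, ← prod_const, prod_univ_sum] at hcoeff
  simp only [MvPolynomial.X, ← MvPolynomial.monomial_sum_one, MvPolynomial.coeff_sum,
    MvPolynomial.coeff_monomial, sum_boole, Fintype.piFinset_univ, Nat.cast_id] at hcoeff
  rw [← hcoeff]
  refine congrArg card (filter_congr fun f _ ↦ ?_)
  rw [Equiv.eq_symm_apply, ← coe_sum_single_one_eq_fiberCard]
  rfl

theorem sum_filter_fiberCard_mem {R : Type*} [CommSemiring R] (s : Finset (σ → ℕ))
    (hs : ∀ J ∈ s, ∑ a, J a = Fintype.card ι) (w : (σ → ℕ) → R) :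
    ∑ f : ι → σ with fiberCard f ∈ s, w (fiberCard f) = ∑ J ∈ s, Nat.multinomial univ J * w J := by
  rw [← sum_fiberwise_of_maps_to (g := fiberCard) fun f hf ↦ (mem_filter.1 hf).2]
  refine sum_congr rfl fun J hJ ↦ ?_
  rw [filter_filter, sum_congr rfl fun f hf ↦ by rw [(mem_filter.1 hf).2.2], sum_const,
    nsmul_eq_mul]
  congr 2
  rw [← card_filter_fiberCard_eq_multinomial J (hs J hJ)]
  congr 1
  exact filter_congr fun f _ ↦ ⟨And.right, fun h ↦ ⟨h ▸ hJ, h⟩⟩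

end FiberCard

theorem Nat.mul_sub_one_div {b : ℕ} (hb : 0 < b) (d : ℕ) : (d * b - 1) / b = d - 1 := by
  rcases Nat.eq_zero_or_pos d with rfl | hd
  · simp
  apply Nat.div_eq_of_lt_le
  · rw [Nat.sub_one_mul]
    omega
  · rw [Nat.sub_add_cancel hd]
    have := Nat.mul_pos hd hb
    omega

theorem sortedLE_iff_lt_card {n : ℕ} (c u : Fin n → ℕ) :
    SortedLE c u ↔ ∀ i : Fin n, (i : ℕ) < #{j | c j ≤ u i} := by
  have card_comp (σ : Equiv.Perm (Fin n)) (i : Fin n) :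
      #{j | c (σ j) ≤ u i} = #{j | c j ≤ u i} :=
    card_equiv σ (by simp)
  constructor
  · rintro ⟨σ, hmono, hle⟩ i
    rw [← card_comp σ]
    exact (Tuple.lt_card_le_iff_apply_le_of_monotone (f := c ∘ σ) (a := u i) (j := i)
      (fun _ _ h ↦ hmono _ _ h)).2 (hle i)
  · intro h
    refine ⟨Tuple.sort c, fun i j hij ↦ Tuple.monotone_sort c hij, fun i ↦ ?_⟩
    exact (Tuple.lt_card_le_iff_apply_le_of_monotone (f := c ∘ Tuple.sort c) (a := u i) (j := i)
      (Tuple.monotone_sort c)).1 (by simpa only [Function.comp_apply, card_comp] using h i)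

theorem forall_lt_div_iff {b d : ℕ} (N : ℕ → ℕ) :
    (∀ i < d * b, i < N (i / b)) ↔ ∀ t < d, (t + 1) * b ≤ N t := by
  constructor
  · intro h t ht
    rcases Nat.eq_zero_or_pos b with rfl | hb
    · simp
    have hle : t * b + b ≤ d * b := by simpa [add_mul] using Nat.mul_le_mul_right b ht
    have hdiv : (b - 1 + t * b) / b = t := by
      rw [Nat.add_mul_div_right _ _ hb, Nat.div_eq_of_lt (by omega), zero_add]
    have := h (b - 1 + t * b) (by omega)
    rw [hdiv] at this
    rw [add_mul, one_mul]
    omega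
  · intro h i hi
    have hb : 0 < b := Nat.pos_of_mul_pos_left (Nat.zero_lt_of_lt hi)
    exact (Nat.lt_mul_of_div_lt (Nat.lt_succ_self _) hb).trans_le
      (h _ ((Nat.div_lt_iff_lt_mul hb).2 hi))

theorem fiberCard_mem_spec_iff {b d : ℕ} (f : Fin (d * b) → Fin d) :
    fiberCard f ∈ spec d b ↔ ∀ t : Fin d, (t + 1 : ℕ) * b ≤ #{i | f i ≤ t} := by
  have hsum : ∑ a, fiberCard f a = d * b := by
    rw [sum_fiberCard]; simp
  simp only [spec, mem_filter, Nat.mem_antidiagonalTuple, hsum, true_and, sum_fiberCard,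
    mem_univ]

@[simps]
def succEmbedding (n d : ℕ) : (Fin n → Fin d) ↪ (Fin n → ℕ) where
  toFun f i := f i + 1
  inj' _ _ h := funext fun i ↦ Fin.ext (by simpa using congrFun h i)

theorem succEmbedding_mem_uParkFinset_iff {b d : ℕ} (f : Fin (d * b) → Fin d) :
    succEmbedding (d * b) d f ∈ uParkFinset b d ↔ fiberCard f ∈ spec d b := by
  have hbound (i : Fin (d * b)) : (f i : ℕ) + 1 ∈ Icc 1 (1 + (d * b - 1) / b) := by
    rw [Nat.mul_sub_one_div (Nat.pos_of_mul_pos_left (Nat.zero_lt_of_lt i.isLt)), mem_Icc]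
    omega
  have hcount (i : Fin (d * b)) :
      #{j | (f j : ℕ) + 1 ≤ 1 + i / b} = #{j | (f j : ℕ) ≤ i / b} :=
    congrArg card (filter_congr fun j _ ↦ by omega)
  rw [uParkFinset, mem_filter, Fintype.mem_piFinset, sortedLE_iff_lt_card, fiberCard_mem_spec_iff]
  simp only [succEmbedding_apply, hbound, implies_true, true_and, hcount]
  simpa only [Fin.forall_iff, Fin.le_iff_val_le_val] using
    forall_lt_div_iff (b := b) (d := d) fun t ↦ #{j | (f j : ℕ) ≤ t}

theorem uParkFinset_eq_map {b d : ℕ} :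
    uParkFinset b d = (univ.filter fun f : Fin (d * b) → Fin d ↦ fiberCard f ∈ spec d b).map
      (succEmbedding (d * b) d) := by
  ext c
  simp only [mem_map, mem_filter, mem_univ, true_and]
  constructor
  · intro hc
    have hc_bound (i : Fin (d * b)) : 1 ≤ c i ∧ c i ≤ d := by
      obtain ⟨hd, hb⟩ := CanonicallyOrderedAdd.mul_pos.1 (Nat.zero_lt_of_lt i.isLt)
      have := Fintype.mem_piFinset.1 (mem_filter.1 hc).1 i
      rw [Nat.mul_sub_one_div hb, mem_Icc] at this
      omega
    have hc_eq : succEmbedding (d * b) d (fun i ↦ ⟨c i - 1, by grind⟩) = c :=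
      funext fun i ↦ by grind [succEmbedding_apply]
    rw [← hc_eq, succEmbedding_mem_uParkFinset_iff] at hc
    exact ⟨_, hc, hc_eq⟩
  · rintro ⟨f, hf, rfl⟩
    exact (succEmbedding_mem_uParkFinset_iff f).2 hf

theorem q_analogue_a_eq_one_general (b d : ℕ) (hd : 0 < d) (q : ℝ) :
    ∑ c ∈ uParkFinset b d, q ^ (Finset.univ.filter (fun i => c i = 1)).card =
      ∑ J ∈ spec d b, (Nat.multinomial Finset.univ J : ℝ) * q ^ (J ⟨0, hd⟩) := by
  have hones (f : Fin (d * b) → Fin d) :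
      #{i | succEmbedding (d * b) d f i = 1} = fiberCard f ⟨0, hd⟩ :=
    congrArg card (filter_congr fun i _ ↦ by simp [Fin.ext_iff])
  have hspec (J) (hJ : J ∈ spec d b) : ∑ a, J a = Fintype.card (Fin (d * b)) := by
    simpa using Nat.mem_antidiagonalTuple.1 (mem_filter.1 hJ).1
  rw [uParkFinset_eq_map, sum_map]
  simp only [hones]
  exact sum_filter_fiberCard_mem (spec d b) hspec fun J ↦ q ^ J ⟨0, hd⟩

theorem q_analogue_a_eq_one (b d : ℕ) (hb : 0 < b) (hd : 0 < d) (q : ℝ) :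
    ∑ c ∈ uParkFinset b d, q ^ (Finset.univ.filter (fun i => c i = 1)).card =
      ∑ J ∈ spec d b, (Nat.multinomial Finset.univ J : ℝ) * q ^ (J ⟨0, hd⟩) :=
  q_analogue_a_eq_one_general b d hd q
end

section
/- For the Pitman–Stanley polynomial P_n(x) = Σ_{(a_1,...,a_n) ∈ park(n)} x_{a_1}···x_{a_n}, where park(n) is the set of classical parking functions of length n (sequences in {1,...,n}^n whose i-th order statistic is at most i), the specialization x = (α, β, ..., β) gives P_n(x) = α·(α + nβ)^{n-1}. -/
open Finset
open scoped Classical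

/-- Classical parking functions of length `n`, 0-indexed: functions `c : Fin n → Fin n`
whose nondecreasing rearrangement satisfies `c_(i) ≤ i`; the car parking at spot
`j ∈ {1,…,n}` corresponds to the value `j - 1 : Fin n`. -/
noncomputable def park (n : ℕ) : Finset (Fin n → Fin n) :=
  Finset.univ.filter (fun c => ∃ σ : Equiv.Perm (Fin n),
    (∀ i j : Fin n, i ≤ j → c (σ i) ≤ c (σ j)) ∧ ∀ i, (c (σ i) : ℕ) ≤ (i : ℕ))

/-!
Sort the parking functions by the set `S` of cars that prefer spot `0`. Deleting these cars and
lowering the other preferences by one is a bijection onto the parking functions of `n - #S` cars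
on `n - 1` spots, and by Pollak's argument there are `#S * n ^ (n - #S - 1)` of these: `m` cars
parking cyclically on `n` spots leave `n - m` spots free, the preferences form a parking function
on the first `n - 1` spots iff the last spot stays free, and adding `t` to every preference rotates
the free spots by `t`. The sum of `#S * n ^ (n - #S - 1) * α ^ #S * β ^ (n - #S)` over `S` is the
differentiated binomial theorem `∑ k C(n, k) k x^k y^(n-k) = n x (x + y)^(n-1)` at `x = α`,
`y = n β`.
-/

section ParkingCondition

variable {ι κ : Type*} [Fintype ι] [Fintype κ] {n : ℕ}

/-- `d` is a parking function of the cars `ι` on the spots `0, …, k - 1`. -/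
def IsParkingOn (k : ℕ) (d : ι → Fin n) : Prop :=
  ∀ j : ℕ, #{i | j ≤ (d i).val} ≤ k - j

lemma IsParkingOn.val_lt {k : ℕ} {d : ι → Fin n} (h : IsParkingOn k d) (i : ι) :
    (d i).val < k := by
  have hi : i ∈ ({i' | (d i).val ≤ (d i').val} : Finset ι) :=
    mem_filter.2 ⟨mem_univ i, le_rfl⟩
  have := (card_pos.2 ⟨i, hi⟩).trans_le (h (d i).val)
  omega

lemma isParkingOn_comp_equiv {k : ℕ} (e : κ ≃ ι) (d : ι → Fin n) :
    IsParkingOn k (d ∘ e) ↔ IsParkingOn k d := by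
  refine forall_congr' fun j => ?_
  have h : #{i | j ≤ ((d ∘ e) i).val} = #{i | j ≤ (d i).val} := card_equiv e fun i => by simp
  rw [h]

lemma card_isParkingOn_congr [DecidableEq ι] [DecidableEq κ] (k : ℕ) (e : ι ≃ κ) :
    #{d : ι → Fin n | IsParkingOn k d} = #{d : κ → Fin n | IsParkingOn k d} :=
  card_equiv (e.arrowCongr (Equiv.refl _)) fun d => by
    simp only [mem_filter, mem_univ, true_and]
    exact (isParkingOn_comp_equiv e.symm d).symm

lemma card_filter_val_mem_le (s : Finset ℕ) : #{x : Fin n | x.val ∈ s} ≤ #s :=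
  card_le_card_of_injOn Fin.val (fun _ hx => (mem_filter.1 hx).2) Fin.val_injective.injOn

end ParkingCondition

namespace CircularParking

variable {n : ℕ} [NeZero n]

noncomputable def nextFree (O : Finset (Fin n)) (s : Fin n) : Fin n :=
  let K : Finset (Fin n) := {k | s + k ∉ O}
  if h : K.Nonempty then s + K.min' h else s

lemma nextFree_notMem {O : Finset (Fin n)} (hO : O ≠ univ) (s : Fin n) : nextFree O s ∉ O := by
  obtain ⟨b, hb⟩ : ∃ b, b ∉ O := by simpa [eq_univ_iff_forall] using hO
  have h : ({k | s + k ∉ O} : Finset (Fin n)).Nonempty := ⟨b - s, by simpa using hb⟩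
  rw [nextFree, dif_pos h]
  exact (mem_filter.1 (min'_mem _ h)).2

lemma nextFree_add (O : Finset (Fin n)) (s t : Fin n) :
    nextFree (O.image (· + t)) (s + t) = nextFree O s + t := by
  have hmem : ∀ k, s + t + k ∈ O.image (· + t) ↔ s + k ∈ O := fun k => by
    rw [add_right_comm]; exact (add_left_injective t).mem_finset_image
  unfold nextFree
  simp only [hmem]
  split_ifs <;> abel

lemma nextFree_mem_Icc {O : Finset (Fin n)} {s b : Fin n} (hb : b ∉ O) (hsb : s ≤ b) :
    nextFree O s ∈ Set.Icc s b := by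
  have h : ({k | s + k ∉ O} : Finset (Fin n)).Nonempty := ⟨b - s, by simpa using hb⟩
  have hle : (({k | s + k ∉ O} : Finset (Fin n)).min' h : ℕ) ≤ b - s := by
    rw [← Fin.sub_val_of_le hsb, ← Fin.le_def]
    exact min'_le _ _ (by simpa using hb)
  have hsb' : (s : ℕ) ≤ b := hsb
  rw [nextFree, dif_pos h, Set.mem_Icc, Fin.le_def, Fin.le_def,
    Fin.val_add_eq_of_add_lt (by omega)]
  omega

variable {m : ℕ}

/-- The spots taken when the cars `m - 1, …, 1, 0` arrive in turn on the circle `Fin n`, each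
parking at the first free spot at or after its preference. -/
noncomputable def occupied : {m : ℕ} → (Fin m → Fin n) → Finset (Fin n)
  | 0, _ => ∅
  | _ + 1, d => insert (nextFree (occupied (Fin.tail d)) (d 0)) (occupied (Fin.tail d))

lemma card_occupied (d : Fin m → Fin n) (hm : m ≤ n) : #(occupied d) = m := by
  induction m with
  | zero => rfl
  | succ m ih =>
    have hcard := ih (Fin.tail d) (by omega)
    have hne : occupied (Fin.tail d) ≠ univ := by
      rw [← Finset.card_lt_iff_ne_univ, hcard, Fintype.card_fin]; omega
    rw [occupied, card_insert_of_notMem (nextFree_notMem hne _), hcard]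

lemma occupied_add_const (d : Fin m → Fin n) (t : Fin n) :
    occupied (fun i => d i + t) = (occupied d).image (· + t) := by
  induction m with
  | zero => rfl
  | succ m ih =>
    rw [occupied, occupied, image_insert, ← nextFree_add, ← ih]
    rfl

/-- Cars preferring a spot in `[j, b]` park in `[j, b]` when `b` stays free. -/
lemma card_filter_le_card_occupied {d : Fin m → Fin n} {b : Fin n} (hb : b ∉ occupied d)
    (j : ℕ) :
    #{i | j ≤ (d i).val ∧ d i ≤ b} ≤ #{x ∈ occupied d | j ≤ x.val ∧ x ≤ b} := by
  induction m with
  | zero => simp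
  | succ m ih =>
    rw [occupied] at hb ⊢
    set O := occupied (Fin.tail d)
    have hbO : b ∉ O := fun h => hb (mem_insert_of_mem h)
    have hO : O ≠ univ := fun h => hbO (h ▸ mem_univ b)
    have ih' := ih hbO
    rw [Fin.card_filter_univ_succ, filter_insert]
    split_ifs with h0 h1
    · rw [card_insert_of_notMem (fun h => nextFree_notMem hO _ (mem_filter.1 h).1)]
      exact Nat.succ_le_succ ih'
    · have hI := nextFree_mem_Icc hbO h0.2
      exact absurd ⟨h0.1.trans (Fin.le_def.1 hI.1), hI.2⟩ h1
    · exact ih'.trans (card_le_card (subset_insert _ _))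
    · exact ih'

lemma isParkingOn_of_top_notMem_occupied {d : Fin m → Fin n} (h : ⊤ ∉ occupied d) :
    IsParkingOn (n - 1) d := by
  intro j
  calc #{i | j ≤ (d i).val} = #{i | j ≤ (d i).val ∧ d i ≤ ⊤} := by simp
    _ ≤ #{x ∈ occupied d | j ≤ x.val ∧ x ≤ ⊤} := card_filter_le_card_occupied h j
    _ ≤ #{x : Fin n | x.val ∈ Ico j (n - 1)} := card_le_card fun x hx => by
        have hx' := mem_filter.1 hx
        have hne : x.val ≠ n - 1 := fun hxtop =>
          h ((Fin.ext (hxtop.trans (Fin.val_top n).symm) : x = ⊤) ▸ hx'.1)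
        have := x.isLt
        simp only [mem_filter, mem_univ, true_and, mem_Ico]
        omega
    _ ≤ n - 1 - j := (card_filter_val_mem_le _).trans (Nat.card_Ico _ _).le

/-- If `⊤` is taken, the largest free spot `b` has all of `(b, ⊤]` taken, by cars that
preferred spots above `b`; too many for the spots above `b + 1`. -/
lemma top_notMem_occupied_of_isParkingOn {d : Fin m → Fin n} (h : IsParkingOn (n - 1) d) :
    ⊤ ∉ occupied d := by
  intro htop
  have hm : m ≤ n - 1 := by simpa using h 0
  have hfree : (occupied d)ᶜ.Nonempty := by
    obtain ⟨a, -, ha⟩ := exists_mem_notMem_of_card_lt_card (s := occupied d) (t := univ)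
      (by have := NeZero.pos n; rw [card_occupied d (by omega), card_univ, Fintype.card_fin]; omega)
    exact ⟨a, mem_compl.2 ha⟩
  set b := (occupied d)ᶜ.max' hfree
  have hb : b ∉ occupied d := mem_compl.1 (max'_mem _ _)
  have hbtop : (b : ℕ) < n - 1 := by
    have hle : (b : ℕ) ≤ n - 1 := Fin.val_top n ▸ Fin.le_def.1 le_top
    have hne : (b : ℕ) ≠ n - 1 := fun hbtop =>
      hb ((Fin.ext (hbtop.trans (Fin.val_top n).symm) : b = ⊤) ▸ htop)
    omega
  have habove : #{x ∈ occupied d | ¬ x ≤ b} = n - 1 - b := by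
    rw [← Fin.card_Ioi]
    congr 1
    ext x
    simp only [mem_filter, not_le, mem_Ioi, and_iff_right_iff_imp]
    exact fun hbx => by_contra fun hx => ((le_max' _ x (mem_compl.2 hx)).trans_lt hbx).false
  have hbelow := card_filter_le_card_occupied hb 0
  simp only [zero_le, true_and] at hbelow
  have hcars := h (b + 1)
  have hsplit := card_filter_add_card_filter_not (s := (univ : Finset (Fin m))) (fun i => d i ≤ b)
  have hsplit' := card_filter_add_card_filter_not (s := occupied d) (fun x => x ≤ b)
  rw [card_occupied d (by omega)] at hsplit'
  simp only [card_univ, Fintype.card_fin, not_le] at hsplit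
  have : #{i | b + 1 ≤ (d i).val} = #{i | b < d i} := rfl
  omega

lemma top_notMem_occupied_iff (d : Fin m → Fin n) :
    ⊤ ∉ occupied d ↔ IsParkingOn (n - 1) d :=
  ⟨isParkingOn_of_top_notMem_occupied, top_notMem_occupied_of_isParkingOn⟩

lemma card_filter_notMem_occupied_add_const (d : Fin m → Fin n) (hm : m ≤ n) (b : Fin n) :
    #{t | b ∉ occupied (d + fun _ => t)} = n - m := by
  calc #{t | b ∉ occupied (d + fun _ => t)} = #{x | x ∉ occupied d} :=
        card_equiv (Equiv.subLeft b) fun t => by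
          simp [Pi.add_def, occupied_add_const, sub_eq_add_neg]
    _ = n - m := by rw [filter_notMem_eq_sdiff, ← compl_eq_univ_sdiff, card_compl,
        Fintype.card_fin, card_occupied d hm]

/-- Pollak's rotation argument: exactly `n - m` of the `n` rotations of any preference sequence
leave the spot `b` free. -/
lemma card_mul_card_filter_notMem_occupied (hm : m ≤ n) (b : Fin n) :
    n * #{d : Fin m → Fin n | b ∉ occupied d} = (n - m) * n ^ m := by
  have hrot (t : Fin n) : #{d : Fin m → Fin n | b ∉ occupied (d + fun _ => t)} =
      #{d : Fin m → Fin n | b ∉ occupied d} :=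
    card_equiv (Equiv.addRight fun _ => t) fun d => by simp
  calc n * #{d : Fin m → Fin n | b ∉ occupied d}
      = ∑ t : Fin n, #{d : Fin m → Fin n | b ∉ occupied (d + fun _ => t)} := by
        simp [hrot]
    _ = ∑ d : Fin m → Fin n, #{t | b ∉ occupied (d + fun _ => t)} := by
        simp only [card_filter]; exact sum_comm
    _ = (n - m) * n ^ m := by
        simp [card_filter_notMem_occupied_add_const _ hm, mul_comm]

theorem card_mul_card_isParkingOn_pred {ι : Type*} [Fintype ι] [DecidableEq ι]
    (hι : Fintype.card ι ≤ n) :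
    n * #{d : ι → Fin n | IsParkingOn (n - 1) d} =
      (n - Fintype.card ι) * n ^ Fintype.card ι := by
  rw [card_isParkingOn_congr _ (Fintype.equivFin ι),
    ← card_mul_card_filter_notMem_occupied hι ⊤]
  congr 2
  ext d
  simp [top_notMem_occupied_iff]

end CircularParking

section park

variable {n : ℕ}

lemma mem_park_iff_isParkingOn (c : Fin n → Fin n) : c ∈ park n ↔ IsParkingOn n c := by
  simp only [park, mem_filter, mem_univ, true_and]
  constructor
  · rintro ⟨σ, -, hσ⟩ j
    calc #{i | j ≤ (c i).val} = #{i | j ≤ (c (σ i)).val} :=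
          (card_equiv σ fun i => by simp).symm
      _ ≤ #{i : Fin n | i.val ∈ Ico j n} :=
        card_le_card fun i hi => by
          simp only [mem_filter, mem_univ, true_and, mem_Ico] at hi ⊢
          exact ⟨hi.trans (hσ i), i.isLt⟩
      _ ≤ n - j := (card_filter_val_mem_le _).trans (Nat.card_Ico _ _).le
  · intro hc
    refine ⟨Tuple.sort c, fun i j hij => Tuple.monotone_sort c hij, fun i => ?_⟩
    by_contra! hlt
    have hmono : #(Ici i) ≤ #{x | (i : ℕ) + 1 ≤ (c x).val} :=
      card_le_card_of_injOn (Tuple.sort c)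
        (fun i' hi' => by
          have := Fin.le_def.1 (Tuple.monotone_sort c (mem_Ici.1 hi'))
          simp only [coe_filter, mem_univ, true_and, Set.mem_ofPred_eq, Function.comp_apply]
            at this ⊢
          omega)
        (Tuple.sort c).injective.injOn
    have := hc (i + 1)
    rw [Fin.card_Ici] at hmono
    omega

end park

section zeros

variable {n : ℕ} [NeZero n] {S : Finset (Fin n)} {c : Fin n → Fin n}

lemma card_filter_le_val_sub_one (hS : ∀ i, c i = 0 ↔ i ∈ S) (j : ℕ) :
    #{i : {x // x ∉ S} | j ≤ (c i - 1).val} = #{x | j + 1 ≤ (c x).val} := by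
  refine card_bij (fun i _ => i.1) (fun i hi => ?_) (fun _ _ _ _ => Subtype.ext) fun x hx => ?_
  · have hne : c i ≠ 0 := fun h => i.2 ((hS i).1 h)
    have := (mem_filter.1 hi).2
    rw [Fin.val_sub_one_of_ne_zero hne] at this
    have hpos : (c i : ℕ) ≠ 0 := Fin.val_eq_zero_iff.not.2 hne
    simp only [mem_filter, mem_univ, true_and]
    omega
  · have hpos := (mem_filter.1 hx).2
    have hne : c x ≠ 0 := fun h => by simp [h] at hpos
    refine ⟨⟨x, fun hxS => hne ((hS x).2 hxS)⟩, ?_, rfl⟩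
    simp only [mem_filter, mem_univ, true_and, Fin.val_sub_one_of_ne_zero hne]
    omega

lemma isParkingOn_iff_sub_one (hS : ∀ i, c i = 0 ↔ i ∈ S) :
    IsParkingOn n c ↔ IsParkingOn (n - 1) fun i : {x // x ∉ S} => c i - 1 := by
  constructor
  · intro hc j
    rw [card_filter_le_val_sub_one hS]
    have := hc (j + 1)
    omega
  · intro hd j
    cases j with
    | zero => simp
    | succ j =>
      have := hd j
      rw [card_filter_le_val_sub_one hS] at this
      omega

lemma card_filter_park_zeros (S : Finset (Fin n)) :
    #{c ∈ park n | ({i | c i = 0} : Finset (Fin n)) = S} =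
      #{d : {x // x ∉ S} → Fin n | IsParkingOn (n - 1) d} := by
  have zeros_eq_iff (c : Fin n → Fin n) :
      ({i | c i = 0} : Finset (Fin n)) = S ↔ ∀ i, c i = 0 ↔ i ∈ S := by
    simp [Finset.ext_iff]
  let extend (d : {x // x ∉ S} → Fin n) (x : Fin n) : Fin n :=
    if h : x ∈ S then 0 else d ⟨x, h⟩ + 1
  refine card_nbij' (fun c i => c i - 1) extend (fun c hc => ?_) (fun d hd => ?_)
    (fun c hc => ?_) (fun d _ => ?_)
  · simp only [mem_coe, mem_filter, mem_park_iff_isParkingOn, zeros_eq_iff] at hc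
    simp only [mem_coe, mem_filter, mem_univ, true_and]
    exact (isParkingOn_iff_sub_one hc.2).1 hc.1
  · simp only [mem_coe, mem_filter, mem_univ, true_and] at hd
    have hS : ∀ x, extend d x = 0 ↔ x ∈ S := fun x => by
      by_cases hx : x ∈ S
      · simp [extend, hx]
      · have := hd.val_lt ⟨x, hx⟩
        simp only [extend, hx, dite_false, iff_false]
        rw [Fin.ext_iff, Fin.val_add_one_of_lt' (by omega), Fin.val_zero]
        omega
    simp only [mem_coe, mem_filter, mem_park_iff_isParkingOn, zeros_eq_iff]
    refine ⟨(isParkingOn_iff_sub_one hS).2 ?_, hS⟩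
    convert hd using 2 with i
    simp [extend, i.2]
  · simp only [mem_coe, mem_filter, zeros_eq_iff] at hc
    funext x
    by_cases hx : x ∈ S
    · simp [extend, hx, (hc.2 x).2 hx]
    · simp [extend, hx]
  · funext i
    simp [extend, i.2]

lemma card_mul_card_filter_park_zeros (S : Finset (Fin n)) :
    n * #{c ∈ park n | ({i | c i = 0} : Finset (Fin n)) = S} = #S * n ^ (n - #S) := by
  have hcard : Fintype.card {x // x ∉ S} = n - #S := by simp
  rw [card_filter_park_zeros, CircularParking.card_mul_card_isParkingOn_pred (by omega), hcard,
    Nat.sub_sub_self (card_le_univ S |>.trans_eq (Fintype.card_fin n))]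

end zeros

section weights

variable {R : Type*} [CommSemiring R]

lemma sum_range_choose_mul_mul_pow (x y : R) (n : ℕ) :
    ∑ k ∈ range (n + 1), (n.choose k : R) * (k * x ^ k * y ^ (n - k)) =
      n * x * (x + y) ^ (n - 1) := by
  cases n with
  | zero => simp
  | succ n =>
    rw [sum_range_succ', add_pow, mul_sum, Nat.add_sub_cancel]
    simp only [Nat.cast_zero, zero_mul, mul_zero, add_zero, Nat.add_sub_add_right]
    refine sum_congr rfl fun k _ => ?_
    have hchoose : ((n + 1).choose (k + 1) : R) * (k + 1) = (n + 1) * n.choose k := by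
      simpa using congrArg (Nat.cast : ℕ → R) (Nat.add_one_mul_choose_eq n k).symm
    push_cast
    calc _ = (((n + 1).choose (k + 1) : R) * (k + 1)) * (x ^ (k + 1) * y ^ (n - k)) := by ring
      _ = _ := by rw [hchoose]; ring

lemma sum_powerset_card_mul_pow {ι : Type*} (s : Finset ι) (x y : R) :
    ∑ t ∈ s.powerset, (#t * x ^ #t * y ^ (#s - #t) : R) = #s * x * (x + y) ^ (#s - 1) := by
  rw [sum_powerset_apply_card (fun k => (k * x ^ k * y ^ (#s - k) : R)),
    ← sum_range_choose_mul_mul_pow]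
  simp [nsmul_eq_mul]

variable {ι M : Type*} [Fintype ι] [Zero M] [DecidableEq M]

lemma prod_ite_eq_zero (c : ι → M) (α β : R) :
    ∏ i, (if c i = 0 then α else β) =
      α ^ #{i | c i = 0} * β ^ (Fintype.card ι - #{i | c i = 0}) := by
  rw [prod_ite, prod_const, prod_const, ← card_univ,
    ← card_filter_add_card_filter_not (s := univ) (fun i => c i = 0), Nat.add_sub_cancel_left]

lemma sum_prod_ite_eq_zero [DecidableEq ι] (A : Finset (ι → M)) (α β : R) :
    ∑ c ∈ A, ∏ i, (if c i = 0 then α else β) =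
      ∑ S ∈ (univ : Finset ι).powerset,
        #{c ∈ A | ({i | c i = 0} : Finset ι) = S} * (α ^ #S * β ^ (Fintype.card ι - #S)) := by
  simp only [prod_ite_eq_zero]
  rw [← sum_fiberwise_of_maps_to (g := fun c => ({i | c i = 0} : Finset ι))
    fun c _ => mem_powerset.2 (subset_univ _)]
  refine sum_congr rfl fun S _ => ?_
  rw [sum_congr rfl fun c hc => by rw [(mem_filter.1 hc).2], sum_const, nsmul_eq_mul]

end weights

/-- The Pitman–Stanley polynomial `P_n(x) = ∑_{a ∈ park(n)} x_{a_1} ⋯ x_{a_n}`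
specialized at `x = (α, β, …, β)` equals `α (α + nβ)^{n-1}`. -/
theorem pitman_stanley_specialization (n : ℕ) (hn : 0 < n) (α β : ℝ) :
    ∑ c ∈ park n, ∏ i, (if (c i : ℕ) = 0 then α else β) =
      α * (α + n * β) ^ (n - 1) := by
  have : NeZero n := ⟨hn.ne'⟩
  refine mul_left_cancel₀ (Nat.cast_ne_zero.2 hn.ne' : (n : ℝ) ≠ 0) ?_
  simp only [Fin.val_eq_zero_iff]
  calc (n : ℝ) * ∑ c ∈ park n, ∏ i, (if c i = 0 then α else β)
      = ∑ S ∈ (univ : Finset (Fin n)).powerset,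
          ((n * #{c ∈ park n | ({i | c i = 0} : Finset (Fin n)) = S} : ℕ) : ℝ) *
            (α ^ #S * β ^ (n - #S)) := by
        rw [sum_prod_ite_eq_zero, mul_sum, Fintype.card_fin]
        push_cast
        simp only [mul_assoc]
    _ = ∑ S ∈ (univ : Finset (Fin n)).powerset, (#S * α ^ #S * (n * β) ^ (n - #S) : ℝ) := by
        refine sum_congr rfl fun S _ => ?_
        rw [card_mul_card_filter_park_zeros]
        push_cast
        ring
    _ = n * (α * (α + n * β) ^ (n - 1)) := by
        rw [← mul_assoc]
        simpa using sum_powerset_card_mul_pow (univ : Finset (Fin n)) α (n * β)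
end
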